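/- Let k be a field of characteristic zero and b, c ∈ k. Define B : MvPolynomial (Fin 3) k → MvPolynomial (Fin 3) k → MvPolynomial (Fin 3) k by B p q = −(b·u₁u₂ + c·u₁u₃)·(∂₀p·∂₂q − ∂₂p·∂₀q) − (b·u₂² + c·u₂u₃)·(∂₁p·∂₂q − ∂₂p·∂₁q), where u₁ = X 0, u₂ = X 1, u₃ = X 2 and ∂ᵢ = pderiv i, so that B u₁ u₂ = 0, B u₃ u₂ = b·u₂² + c·u₂u₃, and B u₃ u₁ = b·u₁u₂ + c·u₁u₃. Then B satisfies the Jacobi identity B p (B q r) + B q (B r p) + B r (B p q) = 0 for all p, q, r; hence B is a Poisson bracket on MvPolynomial (Fin 3) k. -/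
import Mathlib


open MvPolynomial

private lemma pderiv_single_zero {k : Type*} [CommSemiring k] {σ : Type*} [DecidableEq σ]
    (i j n : σ) :
    pderiv i ((Pi.single j (1 : MvPolynomial σ k) : σ → MvPolynomial σ k) n) = 0 := by
  rcases eq_or_ne n j with h | h
  · rw [h, Pi.single_eq_same]; exact pderiv_one
  · rw [Pi.single_eq_of_ne h]; exact map_zero _

private lemma pderiv_comm' {k : Type*} [CommSemiring k] {σ : Type*} [DecidableEq σ] (i j : σ)
    (p : MvPolynomial σ k) : pderiv i (pderiv j p) = pderiv j (pderiv i p) := by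
  induction p using MvPolynomial.induction_on with
  | C a => simp
  | add p q hp hq => simp [hp, hq]
  | mul_X p n hp =>
      simp only [pderiv_mul, map_add, hp, pderiv_X, pderiv_single_zero]
      ring

/-- The candidate Poisson bracket on `k[u₁,u₂,u₃]` with
`⁅u₁,u₂⁆ = 0`, `⁅u₃,u₂⁆ = b·u₂² + c·u₂u₃`, `⁅u₃,u₁⁆ = b·u₁u₂ + c·u₁u₃`. -/
noncomputable def taftQuadBracket {k : Type*} [Field k] (b c : k)
    (p q : MvPolynomial (Fin 3) k) : MvPolynomial (Fin 3) k :=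
  -((C b * (X 0 * X 1) + C c * (X 0 * X 2)) *
      (pderiv 0 p * pderiv 2 q - pderiv 2 p * pderiv 0 q)) -
    (C b * (X 1 * X 1) + C c * (X 1 * X 2)) *
      (pderiv 1 p * pderiv 2 q - pderiv 2 p * pderiv 1 q)

private lemma dd20 {k : Type*} [Field k] (p : MvPolynomial (Fin 3) k) :
    pderiv 2 (pderiv 0 p) = pderiv 0 (pderiv 2 p) := pderiv_comm' 2 0 p
private lemma dd10 {k : Type*} [Field k] (p : MvPolynomial (Fin 3) k) :
    pderiv 1 (pderiv 0 p) = pderiv 0 (pderiv 1 p) := pderiv_comm' 1 0 p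
private lemma dd21 {k : Type*} [Field k] (p : MvPolynomial (Fin 3) k) :
    pderiv 2 (pderiv 1 p) = pderiv 1 (pderiv 2 p) := pderiv_comm' 2 1 p

/-- `taftQuadBracket` satisfies the Jacobi identity; hence it is a Poisson bracket. -/
theorem taftQuadBracket_jacobi {k : Type*} [Field k] [CharZero k] (b c : k) :
    ∀ p q r : MvPolynomial (Fin 3) k,
      taftQuadBracket b c p (taftQuadBracket b c q r) +
        taftQuadBracket b c q (taftQuadBracket b c r p) +
        taftQuadBracket b c r (taftQuadBracket b c p q) = 0 := by
  intro p q r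
  have h01 : (0 : Fin 3) ≠ 1 := by decide
  have h02 : (0 : Fin 3) ≠ 2 := by decide
  have h10 : (1 : Fin 3) ≠ 0 := by decide
  have h12 : (1 : Fin 3) ≠ 2 := by decide
  have h20 : (2 : Fin 3) ≠ 0 := by decide
  have h21 : (2 : Fin 3) ≠ 1 := by decide
  simp only [taftQuadBracket, map_sub, map_add, map_neg, map_mul, pderiv_mul, pderiv_C_mul,
    pderiv_C, pderiv_X_self, pderiv_X_of_ne h01, pderiv_X_of_ne h02, pderiv_X_of_ne h10,
    pderiv_X_of_ne h12, pderiv_X_of_ne h20, pderiv_X_of_ne h21, dd20, dd10, dd21,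
    zero_mul, mul_zero, add_zero, zero_add, mul_one, one_mul]
  ring
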